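/- (Wasserstein bound for mixture-with-convolution corruption) Let X, Y be random vectors in ℝ^D with densities f and g^add, let g^out be another density, δ ∈ [0,1), ε ∈ [0,1), and let f̃ = (1−δ)(f * g^add_ε) + δ g^out where g^add_ε(x) = ε^{−D} g^add(x/ε). Suppose E|Y|^p < ∞ and both f and g^out have finite p-th moments, for some p ∈ [1, ∞). Then W_p(f, f̃)^p ≤ ε^p E|Y|^p + δ · W_p-cost of some coupling between f and g^out; in particular W_p(f, f̃) = O(ε + δ^{1/p}). -/

import Mathlib

open MeasureTheory Set
open scoped ENNReal

/-- The measure induced by the density `f`. -/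
noncomputable def densMeasure {D : ℕ} (f : EuclideanSpace ℝ (Fin D) → ℝ) :
    Measure (EuclideanSpace ℝ (Fin D)) :=
  volume.withDensity fun ξ => ENNReal.ofReal (f ξ)

lemma lintegral_comp_add_smul {D : ℕ} {ε : ℝ} (hε : 0 < ε)
    (x : EuclideanSpace ℝ (Fin D)) (φ : EuclideanSpace ℝ (Fin D) → ℝ≥0∞)
    (hφ : Measurable φ) :
    ∫⁻ y, φ (x + ε • y) = ENNReal.ofReal (ε ^ (-(D : ℝ))) * ∫⁻ w, φ w := by
  have hT : Measurable fun y : EuclideanSpace ℝ (Fin D) => x + ε • y :=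
    (measurable_id.const_smul ε).const_add x
  have hmap : Measure.map (fun y : EuclideanSpace ℝ (Fin D) => x + ε • y) volume
      = ENNReal.ofReal (ε ^ (-(D : ℝ))) • volume := by
    have h1 : (fun y : EuclideanSpace ℝ (Fin D) => x + ε • y)
        = (x + ·) ∘ (ε • ·) := rfl
    rw [h1, ← Measure.map_map (measurable_const_add x) (measurable_const_smul ε),
      Measure.map_addHaar_smul volume hε.ne', Measure.map_smul,
      MeasureTheory.map_add_left_eq_self volume x]
    congr 1
    rw [Real.rpow_neg hε.le, Real.rpow_natCast]
    congr 1
    rw [abs_of_nonneg (by positivity)]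
    congr 1
    simp
  calc ∫⁻ y, φ (x + ε • y) = ∫⁻ w, φ w ∂(Measure.map (fun y => x + ε • y) volume) := by
        rw [lintegral_map hφ hT]
    _ = ENNReal.ofReal (ε ^ (-(D : ℝ))) * ∫⁻ w, φ w := by
        rw [hmap, lintegral_smul_measure, smul_eq_mul]

lemma conv_snd {D : ℕ} (f gadd : EuclideanSpace ℝ (Fin D) → ℝ)
    (hf : Measurable f) (hgadd : Measurable gadd)
    [IsProbabilityMeasure (densMeasure f)] [IsProbabilityMeasure (densMeasure gadd)]
    {ε : ℝ} (hε : 0 < ε) :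
    (Measure.map (fun z : EuclideanSpace ℝ (Fin D) × EuclideanSpace ℝ (Fin D) =>
        (z.1, z.1 + ε • z.2)) ((densMeasure f).prod (densMeasure gadd))).snd
      = volume.withDensity (fun w => ∫⁻ y, ENNReal.ofReal (f y) *
          (ENNReal.ofReal (ε ^ (-(D : ℝ))) * ENNReal.ofReal (gadd (ε⁻¹ • (w - y))))) := by
  have hT : Measurable fun z : EuclideanSpace ℝ (Fin D) × EuclideanSpace ℝ (Fin D) =>
      (z.1, z.1 + ε • z.2) :=
    measurable_fst.prodMk (measurable_fst.add (measurable_snd.const_smul ε))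
  have hS : Measurable fun z : EuclideanSpace ℝ (Fin D) × EuclideanSpace ℝ (Fin D) =>
      z.1 + ε • z.2 :=
    measurable_fst.add (measurable_snd.const_smul ε)
  ext s hs
  rw [Measure.snd_apply hs, Measure.map_apply hT (measurable_snd hs)]
  have hA : MeasurableSet {z : EuclideanSpace ℝ (Fin D) × EuclideanSpace ℝ (Fin D) |
      z.1 + ε • z.2 ∈ s} := hS hs
  have hpre : (fun z : EuclideanSpace ℝ (Fin D) × EuclideanSpace ℝ (Fin D) =>
        (z.1, z.1 + ε • z.2)) ⁻¹' (Prod.snd ⁻¹' s)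
      = {z | z.1 + ε • z.2 ∈ s} := rfl
  rw [hpre, Measure.prod_apply hA]
  have inner_eq : ∀ x : EuclideanSpace ℝ (Fin D),
      densMeasure gadd (Prod.mk x ⁻¹' {z :
          EuclideanSpace ℝ (Fin D) × EuclideanSpace ℝ (Fin D) | z.1 + ε • z.2 ∈ s})
      = ENNReal.ofReal (ε ^ (-(D : ℝ))) *
          ∫⁻ w, ENNReal.ofReal (gadd (ε⁻¹ • (w - x))) * s.indicator 1 w := by
    intro x
    have hBset : Prod.mk x ⁻¹' {z : EuclideanSpace ℝ (Fin D) × EuclideanSpace ℝ (Fin D) |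
        z.1 + ε • z.2 ∈ s} = (fun y => x + ε • y) ⁻¹' s := rfl
    have hBm : MeasurableSet ((fun y : EuclideanSpace ℝ (Fin D) => x + ε • y) ⁻¹' s) :=
      ((measurable_id.const_smul ε).const_add x) hs
    have hψ : Measurable fun w : EuclideanSpace ℝ (Fin D) =>
        ENNReal.ofReal (gadd (ε⁻¹ • (w - x))) * s.indicator 1 w := by
      apply Measurable.mul
      · fun_prop
      · exact measurable_one.indicator hs
    rw [hBset, densMeasure, withDensity_apply _ hBm, ← lintegral_indicator hBm]
    have key : ∀ y : EuclideanSpace ℝ (Fin D),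
        ((fun y : EuclideanSpace ℝ (Fin D) => x + ε • y) ⁻¹' s).indicator
          (fun y => ENNReal.ofReal (gadd y)) y
        = (fun w => ENNReal.ofReal (gadd (ε⁻¹ • (w - x))) * s.indicator 1 w) (x + ε • y) := by
      intro y
      have hy : ε⁻¹ • (x + ε • y - x) = y := by
        rw [add_sub_cancel_left, smul_smul, inv_mul_cancel₀ hε.ne', one_smul]
      simp only [Set.indicator_apply, Set.mem_preimage, hy, Pi.one_apply, mul_ite, mul_one,
        mul_zero]
      by_cases h : x + ε • y ∈ s <;> simp [h]
    rw [lintegral_congr key]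
    exact lintegral_comp_add_smul hε x _ hψ
  rw [lintegral_congr inner_eq]
  have hinner_meas : Measurable fun x : EuclideanSpace ℝ (Fin D) =>
      ENNReal.ofReal (ε ^ (-(D : ℝ))) *
        ∫⁻ w, ENNReal.ofReal (gadd (ε⁻¹ • (w - x))) * s.indicator 1 w := by
    apply Measurable.const_mul
    apply Measurable.lintegral_prod_right (f := fun x w =>
      ENNReal.ofReal (gadd (ε⁻¹ • (w - x))) * s.indicator 1 w)
    apply Measurable.mul
    · fun_prop
    · exact (measurable_one.indicator hs).comp measurable_snd
  rw [densMeasure, lintegral_withDensity_eq_lintegral_mul _ hf.ennreal_ofReal hinner_meas]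
  have step1 : ∀ x : EuclideanSpace ℝ (Fin D),
      ((fun x => ENNReal.ofReal (f x)) * fun x => ENNReal.ofReal (ε ^ (-(D : ℝ))) *
        ∫⁻ w, ENNReal.ofReal (gadd (ε⁻¹ • (w - x))) * s.indicator 1 w) x
      = ∫⁻ w, ENNReal.ofReal (f x) * (ENNReal.ofReal (ε ^ (-(D : ℝ)))
          * ENNReal.ofReal (gadd (ε⁻¹ • (w - x)))) * s.indicator 1 w := by
    intro x
    have hψ : Measurable fun w : EuclideanSpace ℝ (Fin D) =>
        ENNReal.ofReal (gadd (ε⁻¹ • (w - x))) * s.indicator 1 w := by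
      apply Measurable.mul
      · fun_prop
      · exact measurable_one.indicator hs
    rw [Pi.mul_apply, ← mul_assoc, ← lintegral_const_mul _ hψ]
    exact lintegral_congr fun w => by ring
  rw [lintegral_congr step1, lintegral_lintegral_swap]
  · have step2 : ∀ w : EuclideanSpace ℝ (Fin D),
        (∫⁻ x, ENNReal.ofReal (f x) * (ENNReal.ofReal (ε ^ (-(D : ℝ)))
            * ENNReal.ofReal (gadd (ε⁻¹ • (w - x)))) * s.indicator 1 w)
        = s.indicator (fun w => ∫⁻ y, ENNReal.ofReal (f y) * (ENNReal.ofReal (ε ^ (-(D : ℝ)))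
            * ENNReal.ofReal (gadd (ε⁻¹ • (w - y))))) w := by
      intro w
      by_cases h : w ∈ s
      · simp [Set.indicator_of_mem h]
      · simp [Set.indicator_of_notMem h]
    rw [lintegral_congr step2, lintegral_indicator hs, withDensity_apply _ hs]
  · apply Measurable.aemeasurable
    apply Measurable.mul
    · fun_prop
    · exact (measurable_one.indicator hs).comp measurable_snd

/-- Wasserstein bound for the mixture-with-convolution corruption
`f̃ = (1−δ)(f * g^add_ε) + δ g^out`: given any coupling `Π^out` between `f` and `g^out`,
there is a coupling `Π` between `f` and `f̃` whose `p`-th cost is at most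
`ε^p E|Y|^p + δ · (p-th cost of Π^out)`; hence `W_p(f, f̃) = O(ε + δ^{1/p})`. -/
theorem wasserstein_corruption_bound {D : ℕ} (hD : 0 < D)
    (f gadd gout : EuclideanSpace ℝ (Fin D) → ℝ)
    (hf : Measurable f) (hf0 : ∀ x, 0 ≤ f x)
    (hgadd : Measurable gadd) (hgadd0 : ∀ x, 0 ≤ gadd x)
    (hgout : Measurable gout) (hgout0 : ∀ x, 0 ≤ gout x)
    (hfprob : IsProbabilityMeasure (densMeasure f))
    (hgaddprob : IsProbabilityMeasure (densMeasure gadd))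
    (hgoutprob : IsProbabilityMeasure (densMeasure gout))
    (δ ε : ℝ) (hδ : δ ∈ Set.Ico (0 : ℝ) 1) (hε : ε ∈ Set.Ioo (0 : ℝ) 1)
    (p : ℝ) (hp : 1 ≤ p)
    (hmomY : ∫⁻ y, ENNReal.ofReal (‖y‖ ^ p) ∂densMeasure gadd ≠ ∞)
    (ftilde : EuclideanSpace ℝ (Fin D) → ℝ)
    (hftilde : ∀ x, ftilde x =
      (1 - δ) * (∫ y, f y * (ε ^ (-(D : ℝ)) * gadd (ε⁻¹ • (x - y)))) + δ * gout x)
    (Pout : Measure (EuclideanSpace ℝ (Fin D) × EuclideanSpace ℝ (Fin D)))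
    (hPout_fst : Pout.fst = densMeasure f) (hPout_snd : Pout.snd = densMeasure gout)
    (hPout_cost : ∫⁻ z, ENNReal.ofReal (dist z.1 z.2 ^ p) ∂Pout ≠ ∞) :
    ∃ Pi : Measure (EuclideanSpace ℝ (Fin D) × EuclideanSpace ℝ (Fin D)),
      Pi.fst = densMeasure f ∧ Pi.snd = densMeasure ftilde ∧
      ∫⁻ z, ENNReal.ofReal (dist z.1 z.2 ^ p) ∂Pi ≤
        ENNReal.ofReal (ε ^ p) * ∫⁻ y, ENNReal.ofReal (‖y‖ ^ p) ∂densMeasure gadd +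
          ENNReal.ofReal δ * ∫⁻ z, ENNReal.ofReal (dist z.1 z.2 ^ p) ∂Pout := by
  obtain ⟨hε0, hε1⟩ := hε
  obtain ⟨hδ0, hδ1⟩ := hδ
  set ρ := (densMeasure f).prod (densMeasure gadd) with hρ
  set T : EuclideanSpace ℝ (Fin D) × EuclideanSpace ℝ (Fin D) →
      EuclideanSpace ℝ (Fin D) × EuclideanSpace ℝ (Fin D) :=
    fun z => (z.1, z.1 + ε • z.2) with hTdef
  have hT : Measurable T :=
    measurable_fst.prodMk (measurable_fst.add (measurable_snd.const_smul ε))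
  set P1 := ρ.map T with hP1
  set H : EuclideanSpace ℝ (Fin D) → ℝ≥0∞ := fun w => ∫⁻ y, ENNReal.ofReal (f y) *
      (ENNReal.ofReal (ε ^ (-(D : ℝ))) * ENNReal.ofReal (gadd (ε⁻¹ • (w - y)))) with hH
  have hsnd1 : P1.snd = volume.withDensity H := conv_snd f gadd hf hgadd hε0
  have hHmeas : Measurable H := by
    apply Measurable.lintegral_prod_right (f := fun w y => ENNReal.ofReal (f y) *
      (ENNReal.ofReal (ε ^ (-(D : ℝ))) * ENNReal.ofReal (gadd (ε⁻¹ • (w - y)))))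
    fun_prop
  have hP1prob : IsProbabilityMeasure P1 := Measure.isProbabilityMeasure_map hT.aemeasurable
  have hP1fst : P1.fst = densMeasure f := by
    have h1 : P1.fst = ρ.fst := by
      show (ρ.map T).map Prod.fst = ρ.map Prod.fst
      rw [Measure.map_map measurable_fst hT]
      rfl
    rw [h1, Measure.fst_prod]
  -- H integrates to 1
  have hHint : ∫⁻ w, H w = 1 := by
    have h1 : IsProbabilityMeasure P1.snd := by infer_instance
    have h2 := measure_univ (μ := P1.snd)
    rw [hsnd1, withDensity_apply _ MeasurableSet.univ, setLIntegral_univ] at h2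
    exact h2
  have hae_fin : ∀ᵐ w : EuclideanSpace ℝ (Fin D) ∂volume, H w ≠ ∞ := by
    filter_upwards [ae_lt_top hHmeas (by rw [hHint]; exact ENNReal.one_ne_top)] with w hw
    exact hw.ne
  -- a.e. identification of densities
  have hae_eq : ∀ᵐ w : EuclideanSpace ℝ (Fin D) ∂volume,
      ENNReal.ofReal (ftilde w)
        = ENNReal.ofReal (1 - δ) * H w + ENNReal.ofReal δ * ENNReal.ofReal (gout w) := by
    filter_upwards [hae_fin] with w hw
    set u : EuclideanSpace ℝ (Fin D) → ℝ :=
      fun y => f y * (ε ^ (-(D : ℝ)) * gadd (ε⁻¹ • (w - y))) with hu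
    have hu_nonneg : ∀ y, 0 ≤ u y := fun y =>
      mul_nonneg (hf0 y) (mul_nonneg (by positivity) (hgadd0 _))
    have hu_meas : Measurable u := by fun_prop
    have hofReal : ∀ y, ENNReal.ofReal (u y) = ENNReal.ofReal (f y) *
        (ENNReal.ofReal (ε ^ (-(D : ℝ))) * ENNReal.ofReal (gadd (ε⁻¹ • (w - y)))) := by
      intro y
      rw [hu, ENNReal.ofReal_mul (hf0 y), ENNReal.ofReal_mul (by positivity)]
    have hlint : ∫⁻ y, ENNReal.ofReal (u y) = H w := lintegral_congr hofReal
    have hint : Integrable u := by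
      refine ⟨hu_meas.aestronglyMeasurable, ?_⟩
      rw [hasFiniteIntegral_iff_ofReal (Filter.Eventually.of_forall hu_nonneg), hlint]
      exact hw.lt_top
    have hI : ENNReal.ofReal (∫ y, u y) = H w := by
      rw [MeasureTheory.ofReal_integral_eq_lintegral_ofReal hint
        (Filter.Eventually.of_forall hu_nonneg)]
      exact hlint
    rw [hftilde w, ENNReal.ofReal_add
      (mul_nonneg (by linarith) (integral_nonneg hu_nonneg)) (mul_nonneg hδ0 (hgout0 w)),
      ENNReal.ofReal_mul (by linarith), ENNReal.ofReal_mul hδ0, hI]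
  -- the coupling
  refine ⟨ENNReal.ofReal (1 - δ) • P1 + ENNReal.ofReal δ • Pout, ?_, ?_, ?_⟩
  · show Measure.map Prod.fst _ = _
    rw [Measure.map_add _ _ measurable_fst, Measure.map_smul, Measure.map_smul]
    show ENNReal.ofReal (1 - δ) • P1.fst + ENNReal.ofReal δ • Pout.fst = _
    rw [hP1fst, hPout_fst, ← add_smul, ← ENNReal.ofReal_add (by linarith) hδ0,
      sub_add_cancel, ENNReal.ofReal_one, one_smul]
  · show Measure.map Prod.snd _ = _
    rw [Measure.map_add _ _ measurable_snd, Measure.map_smul, Measure.map_smul]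
    show ENNReal.ofReal (1 - δ) • P1.snd + ENNReal.ofReal δ • Pout.snd = _
    rw [hsnd1, hPout_snd, densMeasure, densMeasure,
      ← withDensity_smul _ hHmeas, ← withDensity_smul _ hgout.ennreal_ofReal,
      ← withDensity_add_left (hHmeas.const_smul _)]
    exact (withDensity_congr_ae hae_eq).symm
  · have hcost : Measurable fun z : EuclideanSpace ℝ (Fin D) × EuclideanSpace ℝ (Fin D) =>
        ENNReal.ofReal (dist z.1 z.2 ^ p) := by
      have : Measurable fun z : EuclideanSpace ℝ (Fin D) × EuclideanSpace ℝ (Fin D) =>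
        dist z.1 z.2 := measurable_fst.dist measurable_snd
      fun_prop
    rw [lintegral_add_measure, lintegral_smul_measure, lintegral_smul_measure]
    have hcost1 : ∫⁻ z, ENNReal.ofReal (dist z.1 z.2 ^ p) ∂P1
        = ENNReal.ofReal (ε ^ p) * ∫⁻ y, ENNReal.ofReal (‖y‖ ^ p) ∂densMeasure gadd := by
      rw [hP1, lintegral_map hcost hT]
      have heq : ∀ z : EuclideanSpace ℝ (Fin D) × EuclideanSpace ℝ (Fin D),
          ENNReal.ofReal (dist (T z).1 (T z).2 ^ p)
            = ENNReal.ofReal (ε ^ p) * ENNReal.ofReal (‖z.2‖ ^ p) := by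
        intro z
        rw [hTdef]
        show ENNReal.ofReal (dist z.1 (z.1 + ε • z.2) ^ p) = _
        rw [dist_self_add_right, norm_smul, Real.norm_eq_abs, abs_of_nonneg hε0.le,
          Real.mul_rpow hε0.le (norm_nonneg _), ENNReal.ofReal_mul (by positivity)]
      rw [lintegral_congr heq, lintegral_const_mul _ (by fun_prop :
        Measurable fun z : EuclideanSpace ℝ (Fin D) × EuclideanSpace ℝ (Fin D) =>
          ENNReal.ofReal (‖z.2‖ ^ p))]
      congr 1
      have : ∫⁻ z, ENNReal.ofReal (‖z.2‖ ^ p) ∂ρ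
          = ∫⁻ y, ENNReal.ofReal (‖y‖ ^ p) ∂ρ.snd := by
        rw [Measure.snd, lintegral_map (by fun_prop) measurable_snd]
      rw [this, hρ, Measure.snd_prod]
    rw [hcost1]
    calc ENNReal.ofReal (1 - δ) * (ENNReal.ofReal (ε ^ p) *
            ∫⁻ y, ENNReal.ofReal (‖y‖ ^ p) ∂densMeasure gadd) +
          ENNReal.ofReal δ * ∫⁻ z, ENNReal.ofReal (dist z.1 z.2 ^ p) ∂Pout
        ≤ 1 * (ENNReal.ofReal (ε ^ p) *
            ∫⁻ y, ENNReal.ofReal (‖y‖ ^ p) ∂densMeasure gadd) +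
          ENNReal.ofReal δ * ∫⁻ z, ENNReal.ofReal (dist z.1 z.2 ^ p) ∂Pout := by
          gcongr
          exact ENNReal.ofReal_le_one.2 (by linarith)
      _ = _ := by rw [one_mul]
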